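/- arXiv:2505.14661 — 2 statements merged into one kernel-verified Lean document; each statement's English description precedes it below -/
import Mathlib

section
/- If a subplan S of a plan P is dominated by another subplan S' (same logical structure), then the plan P' obtained by replacing S with S' in P dominates P, assuming all operator qualities are strictly positive. -/
def planQuality (P : List (ℝ × ℝ)) : ℝ := (P.map Prod.fst).prod
def planCost (P : List (ℝ × ℝ)) : ℝ := (P.map Prod.snd).sum

def Dominates (Q P : List (ℝ × ℝ)) : Prop :=
  planQuality P ≤ planQuality Q ∧ planCost Q ≤ planCost P ∧
    (planQuality P < planQuality Q ∨ planCost Q < planCost P)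

theorem planQuality_append (P Q : List (ℝ × ℝ)) :
    planQuality (P ++ Q) = planQuality P * planQuality Q := by
  simp only [planQuality, List.map_append, List.prod_append]

theorem planCost_append (P Q : List (ℝ × ℝ)) :
    planCost (P ++ Q) = planCost P + planCost Q := by
  simp only [planCost, List.map_append, List.sum_append]

theorem planQuality_pos {P : List (ℝ × ℝ)} (hP : ∀ p ∈ P, 0 < p.1) : 0 < planQuality P :=
  List.prod_pos fun _ hx => by
    obtain ⟨p, hp, rfl⟩ := List.mem_map.mp hx
    exact hP p hp

theorem replace_dominated_subplan_general
    (S S' R : List (ℝ × ℝ))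
    (hR : ∀ p ∈ R, 0 < p.1)
    (hdom : Dominates S' S) :
    Dominates (S' ++ R) (S ++ R) := by
  obtain ⟨hq, hc, hstrict⟩ := hdom
  have hRq := planQuality_pos hR
  simp only [Dominates, planQuality_append, planCost_append]
  refine ⟨by gcongr, by gcongr, ?_⟩
  rcases hstrict with hq' | hc'
  · exact Or.inl (by gcongr)
  · exact Or.inr (by gcongr)

/-- If a subplan `S` of the plan `P = S ++ R` is dominated by another subplan `S'`
(with the same logical structure), then `P' = S' ++ R` dominates `P`, assuming all
operator qualities are strictly positive. -/
theorem replace_dominated_subplan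
    (S S' R : List (ℝ × ℝ))
    (hS : ∀ p ∈ S, 0 < p.1) (hS' : ∀ p ∈ S', 0 < p.1) (hR : ∀ p ∈ R, 0 < p.1)
    (hdom : Dominates S' S) :
    Dominates (S' ++ R) (S ++ R) :=
  replace_dominated_subplan_general S S' R hR hdom
end

section
/- In the Pareto elimination rule, if the true metrics of all operators lie in their confidence intervals, then any operator whose quality-UCB and cost-LCB rectangle has empty overlap with every frontier operator's (quality-LCB, cost-UCB) region in the dominance sense is truly not Pareto-optimal; hence eliminating it never removes a truly Pareto-optimal operator. -/
noncomputable def paretoFrontier {ι : Type*} (F : Finset ι) (q c : ι → ℝ) : Finset ι :=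
  {k ∈ F | ¬ ∃ j ∈ F, (q k ≤ q j ∧ c j ≤ c k ∧ (q k < q j ∨ c j < c k))}

theorem not_mem_paretoFrontier_of_lt_of_le {ι : Type*} {F : Finset ι} {q c : ι → ℝ} {i j : ι}
    (hj : j ∈ F) (hq : q i < q j) (hc : c j ≤ c i) : i ∉ paretoFrontier F q c :=
  fun hi ↦ (Finset.mem_filter.mp hi).2 ⟨j, hj, hq.le, hc, Or.inl hq⟩

theorem lt_of_separated_intervals {x u l y : ℝ} (hx : x ≤ u) (hul : u < l) (hy : l ≤ y) :
    x < y :=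
  hx.trans_lt (hul.trans_le hy)

/-- Pareto elimination is safe. Operators are drawn from a finite set `F`, with true
quality `q` and cost `c`, and confidence intervals `[lq, uq]` and `[lc, uc]` containing
the truth. If operator `i` fails the overlap test against some operator `j ∈ F`
(i.e. `uq i < lq j` and `uc j < lc i`), then `i` is strictly dominated in truth by `j`
and hence is not on the true Pareto frontier (maximize quality, minimize cost). -/
theorem eliminated_operator_not_pareto_optimal
    {ι : Type*} (F : Finset ι)
    (q c lq uq lc uc : ι → ℝ)
    (hq : ∀ i ∈ F, lq i ≤ q i ∧ q i ≤ uq i)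
    (hc : ∀ i ∈ F, lc i ≤ c i ∧ c i ≤ uc i)
    (i : ι) (hi : i ∈ F)
    (helim : ∃ j ∈ F, uq i < lq j ∧ uc j < lc i) :
    (∃ j ∈ F, q i < q j ∧ c j < c i) ∧
      i ∉ {k ∈ F | ¬ ∃ j ∈ F, (q k ≤ q j ∧ c j ≤ c k ∧ (q k < q j ∨ c j < c k))} := by
  obtain ⟨j, hj, hquality, hcost⟩ := helim
  have hqij : q i < q j := lt_of_separated_intervals (hq i hi).2 hquality (hq j hj).1
  have hcji : c j < c i := lt_of_separated_intervals (hc j hj).2 hcost (hc i hi).1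
  exact ⟨⟨j, hj, hqij, hcji⟩, not_mem_paretoFrontier_of_lt_of_le hj hqij hcji.le⟩
end
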